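/- Suppose X and Y are injective metric spaces, A ⊆ X is a set that spans X, and B ⊆ Y is a set that spans Y. Then d_GH(X, Y) ≤ 2 · d_GH(A, B), where d_GH denotes the Gromov–Hausdorff distance. -/

import Mathlib

open Metric Set
open scoped ENNReal

/-- `A` spans `X`: for all `x x'`, `d(x,x') = sup_{a ∈ A} (d(x,a) − d(x',a))`. -/
def Spans {X : Type} [MetricSpace X] (A : Set X) : Prop :=
  ∀ x x' : X, IsLUB ((fun a => dist x a - dist x' a) '' A) (dist x x')

/-- A metric space `Y` is injective: for every metric space `B`, every subset `A ⊆ B`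
and every 1-Lipschitz map `f : A → Y` there is a 1-Lipschitz map `g : B → Y`
extending `f`. -/
def IsInjectiveMS (Y : Type) [MetricSpace Y] : Prop :=
  ∀ (B : Type) [MetricSpace B] (A : Set B) (f : A → Y),
    LipschitzWith 1 f → ∃ g : B → Y, LipschitzWith 1 g ∧ ∀ a : A, g a = f a

/-- A realization of (isometric copies of) `X` and `Y` inside a common metric space `Z`
with Hausdorff distance `< ρ`. -/
structure GHRealization (X Y : Type) [MetricSpace X] [MetricSpace Y] (ρ : ℝ≥0∞) :
    Type 1 where
  Z : Type
  [mZ : MetricSpace Z]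
  X' : Set Z
  Y' : Set Z
  isomX : Nonempty (X ≃ᵢ X')
  isomY : Nonempty (Y ≃ᵢ Y')
  hausdorff_lt : EMetric.hausdorffEdist X' Y' < ρ

/-- The Gromov–Hausdorff distance: the infimum of all `ρ > 0` such that `X` and `Y`
admit isometric copies in a common metric space at Hausdorff distance `< ρ`. -/
noncomputable def ghDist (X Y : Type) [MetricSpace X] [MetricSpace Y] : ℝ≥0∞ :=
  ⨅ (ρ : ℝ≥0∞) (_ : 0 < ρ ∧ Nonempty (GHRealization X Y ρ)), ρ

/-! A realization of `A` and `B` at Hausdorff distance `< r` is a correspondence `a ~ b` of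
distortion `2r`. Since `Y` is injective, the balls `B(b, d(x, a) + r)` with `a ~ b`, which
intersect pairwise, have a common point `y`; the spanning property of `A` then gives the reverse
bound `d(x, a) ≤ d(y, b) + 3r`. Together with the symmetric construction from `Y` to `X`, this
yields a correspondence between `X` and `Y` whose distortion (measured through the spanning sets
`A` and `B`) is `r + 3r = 4r`, so `d_GH(X, Y) ≤ 2r`. -/

structure IsCorrespondence {X Y : Type*} [PseudoMetricSpace X] [PseudoMetricSpace Y]
    (R : X → Y → Prop) (D : ℝ) : Prop where
  exists_right : ∀ x, ∃ y, R x y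
  exists_left : ∀ y, ∃ x, R x y
  abs_dist_sub_dist_le : ∀ ⦃x x' y y'⦄, R x y → R x' y' → |dist x x' - dist y y'| ≤ D

namespace IsCorrespondence

variable {X Y : Type*} [PseudoMetricSpace X] [PseudoMetricSpace Y] {R : X → Y → Prop} {D : ℝ}

theorem flip (hR : IsCorrespondence R D) : IsCorrespondence (_root_.flip R) D where
  exists_right := hR.exists_left
  exists_left := hR.exists_right
  abs_dist_sub_dist_le _ _ _ _ h h' := by
    rw [abs_sub_comm]; exact hR.abs_dist_sub_dist_le h h'

theorem dist_le_dist_add (hR : IsCorrespondence R D) {x x' : X} {y y' : Y}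
    (h : R x y) (h' : R x' y') : dist y y' ≤ dist x x' + D := by
  linarith [neg_abs_le (dist x x' - dist y y'), hR.abs_dist_sub_dist_le h h']

end IsCorrespondence

theorem ghDist_le_of_isometry {X Y Z : Type} [MetricSpace X] [MetricSpace Y] [MetricSpace Z]
    {f : X → Z} {g : Y → Z} (hf : Isometry f) (hg : Isometry g) {h : ℝ}
    (hfg : ∀ x, ∃ y, dist (f x) (g y) ≤ h) (hgf : ∀ y, ∃ x, dist (f x) (g y) ≤ h) :
    ghDist X Y ≤ ENNReal.ofReal h := by
  refine le_of_forall_gt_imp_ge_of_dense fun ρ hρ =>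
    (iInf₂_le ρ ⟨zero_le.trans_lt hρ, ⟨?_⟩⟩ : ghDist X Y ≤ ρ)
  refine { Z := Z, X' := range f, Y' := range g, isomX := ⟨hf.isometryEquivOnRange⟩,
           isomY := ⟨hg.isometryEquivOnRange⟩, hausdorff_lt := ?_ }
  refine (hausdorffEDist_le_of_mem_edist ?_ ?_).trans_lt hρ
  · rintro _ ⟨x, rfl⟩
    obtain ⟨y, hy⟩ := hfg x
    exact ⟨g y, mem_range_self y, by rw [edist_dist]; exact ENNReal.ofReal_le_ofReal hy⟩
  · rintro _ ⟨y, rfl⟩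
    obtain ⟨x, hx⟩ := hgf y
    exact ⟨f x, mem_range_self x, by
      rw [edist_dist, dist_comm]; exact ENNReal.ofReal_le_ofReal hx⟩

theorem ghDist_le_of_isCorrespondence {X Y : Type} [MetricSpace X] [MetricSpace Y]
    {R : X → Y → Prop} {h : ℝ} (hR : IsCorrespondence R (2 * h)) (hh : 0 < h) :
    ghDist X Y ≤ ENNReal.ofReal h := by
  rcases isEmpty_or_nonempty X with hX | ⟨⟨x₀⟩⟩
  · have : IsEmpty Y := ⟨fun y => (hR.exists_left y).elim fun x _ => isEmptyElim x⟩
    exact ghDist_le_of_isometry (f := id) (g := isEmptyElim) isometry_id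
      (Isometry.of_dist_eq isEmptyElim) isEmptyElim isEmptyElim
  obtain ⟨y₀, h₀⟩ := hR.exists_right x₀
  let P := {p : X × Y // R p.1 p.2}
  have : Nonempty P := ⟨⟨(x₀, y₀), h₀⟩⟩
  let : MetricSpace (X ⊕ Y) := glueMetricApprox (fun p : P => p.1.1) (fun p : P => p.1.2) h hh
    fun p q => hR.abs_dist_sub_dist_le p.2 q.2
  have glued (p : P) : dist (Sum.inl p.1.1 : X ⊕ Y) (Sum.inr p.1.2) ≤ h :=
    (glueDist_glued_points (fun p : P => p.1.1) (fun p : P => p.1.2) h p).le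
  refine ghDist_le_of_isometry (f := Sum.inl) (g := Sum.inr)
    (Isometry.of_dist_eq fun _ _ => rfl) (Isometry.of_dist_eq fun _ _ => rfl)
    (fun x => ?_) (fun y => ?_)
  · obtain ⟨y, hxy⟩ := hR.exists_right x
    exact ⟨y, glued ⟨(x, y), hxy⟩⟩
  · obtain ⟨x, hxy⟩ := hR.exists_left y
    exact ⟨x, glued ⟨(x, y), hxy⟩⟩

theorem GHRealization.exists_isCorrespondence {X Y : Type} [MetricSpace X] [MetricSpace Y]
    {ρ : ℝ≥0∞} (R : GHRealization X Y ρ) :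
    ∃ r : ℝ, 0 < r ∧ ENNReal.ofReal r < ρ ∧
      ∃ C : X → Y → Prop, IsCorrespondence C (2 * r) := by
  let := R.mZ
  obtain ⟨iX⟩ := R.isomX
  obtain ⟨iY⟩ := R.isomY
  have hd : hausdorffEDist R.X' R.Y' < ρ := R.hausdorff_lt
  obtain ⟨q, hdq, hqρ⟩ := exists_between hd
  have hq : q ≠ ⊤ := hqρ.ne_top
  have hq₀ : 0 < q.toReal := ENNReal.toReal_pos (zero_le.trans_lt hdq).ne' hq
  refine ⟨q.toReal, hq₀, by rwa [ENNReal.ofReal_toReal hq],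
    fun x y => dist (iX x : R.Z) (iY y) < q.toReal, ⟨fun x => ?_, fun y => ?_, ?_⟩⟩
  · obtain ⟨z, hz, hxz⟩ := infEDist_lt_iff.mp
      ((infEDist_le_hausdorffEDist_of_mem (iX x).2).trans_lt hdq)
    refine ⟨iY.symm ⟨z, hz⟩, ?_⟩
    rwa [iY.apply_symm_apply, ← edist_lt_ofReal, ENNReal.ofReal_toReal hq]
  · rw [hausdorffEDist_comm] at hdq
    obtain ⟨z, hz, hyz⟩ := infEDist_lt_iff.mp
      ((infEDist_le_hausdorffEDist_of_mem (iY y).2).trans_lt hdq)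
    refine ⟨iX.symm ⟨z, hz⟩, ?_⟩
    rwa [iX.apply_symm_apply, dist_comm, ← edist_lt_ofReal, ENNReal.ofReal_toReal hq]
  · intro x x' y y' h h'
    have hX : dist x x' = dist (iX x : R.Z) (iX x') := (iX.dist_eq x x').symm
    have hY : dist y y' = dist (iY y : R.Z) (iY y') := (iY.dist_eq y y').symm
    rw [hX, hY, ← Real.dist_eq, two_mul]
    exact (dist_dist_dist_le _ _ _ _).trans (add_le_add h.le h'.le)

open Classical in
@[reducible]
noncomputable def starMetric {α : Type*} (τ : α → ℝ) (hτ : ∀ p, 0 ≤ τ p)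
    (hτ' : ∀ p q, p ≠ q → 0 < τ p + τ q) : MetricSpace α where
  dist p q := if p = q then 0 else τ p + τ q
  dist_self p := if_pos rfl
  dist_comm p q := by
    by_cases h : p = q
    · subst h; rfl
    · simp only [h, Ne.symm h, if_false, add_comm]
  dist_triangle p q r := by
    split_ifs <;> simp_all <;> linarith [hτ p, hτ q, hτ r]
  eq_of_dist_eq_zero {p q} h := by
    by_contra hpq
    simp only [hpq, if_false] at h
    exact (hτ' p q hpq).ne' h

theorem IsInjectiveMS.exists_forall_dist_le {Y : Type} [MetricSpace Y] (hY : IsInjectiveMS Y)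
    {ι : Type} (c : ι → Y) (ρ : ι → ℝ) (hρ : ∀ i, 0 < ρ i)
    (hc : ∀ i j, i ≠ j → dist (c i) (c j) ≤ ρ i + ρ j) :
    ∃ y, ∀ i, dist y (c i) ≤ ρ i := by
  -- Extend `some i ↦ c i` to the star whose leaves `some i` hang at distance `ρ i` off the
  -- centre `none`; the image of the centre is the common point.
  let τ : Option ι → ℝ := fun p => p.elim 0 ρ
  have hτ (p : Option ι) : 0 ≤ τ p := by cases p <;> simp [τ, (hρ _).le]
  have hτ' : ∀ p q : Option ι, p ≠ q → 0 < τ p + τ q := by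
    rintro (_ | i) (_ | j) hpq
    · exact absurd rfl hpq
    all_goals simp only [τ, Option.elim_none, Option.elim_some]
    · linarith [hρ j]
    · linarith [hρ i]
    · linarith [hρ i, hρ j]
  let _ : MetricSpace (Option ι) := starMetric τ hτ hτ'
  have dist_some (i j : ι) (hij : i ≠ j) : dist (some i) (some j) = ρ i + ρ j :=
    if_neg (Option.some_injective _ |>.ne hij)
  let f : {p : Option ι | p.isSome} → Y := fun p => c (p.1.get p.2)
  have hf : LipschitzWith 1 f := by
    refine LipschitzWith.of_dist_le_mul fun ⟨p, hp⟩ ⟨q, hq⟩ => ?_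
    obtain ⟨i, rfl⟩ := Option.isSome_iff_exists.mp hp
    obtain ⟨j, rfl⟩ := Option.isSome_iff_exists.mp hq
    rw [NNReal.coe_one, one_mul, Subtype.dist_eq]
    by_cases hij : i = j
    · subst hij; simp
    · rw [dist_some i j hij]; exact hc i j hij
  obtain ⟨g, hg, hgf⟩ := hY (Option ι) _ f hf
  refine ⟨g none, fun i => ?_⟩
  calc dist (g none) (c i) = dist (g none) (g (some i)) := by rw [hgf ⟨some i, rfl⟩]; rfl
    _ ≤ dist (none : Option ι) (some i) := by simpa using hg.dist_le_mul none (some i)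
    _ = ρ i := (if_neg (Option.some_ne_none i).symm).trans (zero_add _)

theorem Spans.dist_le_of_forall {X : Type} [MetricSpace X] {A : Set X} (hA : Spans A)
    {x x' : X} {c : ℝ} (h : ∀ a ∈ A, dist x a - dist x' a ≤ c) : dist x x' ≤ c :=
  (hA x x').2 <| by rintro _ ⟨a, ha, rfl⟩; exact h a ha

section ApproxDist

variable {X Y : Type} [MetricSpace X] [MetricSpace Y] {A : Set X} {B : Set Y}
  {C : A → B → Prop} {s t : ℝ}

def ApproxDist (C : A → B → Prop) (s t : ℝ) (x : X) (y : Y) : Prop :=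
  ∀ a b, C a b → dist y b ≤ dist x a + s ∧ dist x a ≤ dist y b + t

theorem approxDist_flip {x : X} {y : Y} :
    ApproxDist (flip C) t s y x ↔ ApproxDist C s t x y :=
  ⟨fun h a b hab => (h b a hab).symm, fun h b a hab => (h a b hab).symm⟩

theorem IsInjectiveMS.exists_approxDist (hY : IsInjectiveMS Y) (hA : Spans A) {r : ℝ}
    (hr : 0 < r) (hC : IsCorrespondence C (2 * r)) (x : X) :
    ∃ y, ApproxDist C r (3 * r) x y := by
  obtain ⟨y, hy⟩ := hY.exists_forall_dist_le (fun p : {p : A × B // C p.1 p.2} => (p.1.2 : Y))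
    (fun p => dist x p.1.1 + r) (fun p => by positivity) fun p q _ => by
      have : dist (p.1.2 : Y) q.1.2 ≤ dist (p.1.1 : X) q.1.1 + 2 * r :=
        hC.dist_le_dist_add p.2 q.2
      linarith [dist_triangle_left (p.1.1 : X) q.1.1 x]
  refine ⟨y, fun a b hab => ⟨hy ⟨(a, b), hab⟩, ?_⟩⟩
  rw [dist_comm]
  refine hA.dist_le_of_forall fun a' ha' => ?_
  obtain ⟨b', hab'⟩ := hC.exists_right ⟨a', ha'⟩
  have : dist (a : X) a' ≤ dist (b : Y) b' + 2 * r := hC.flip.dist_le_dist_add hab hab'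
  linarith [hy ⟨(⟨a', ha'⟩, b'), hab'⟩, dist_triangle_left (b : Y) b' y]

theorem ApproxDist.dist_le_dist_add (hB : Spans B) (hC : ∀ b, ∃ a, C a b) {x x' : X} {y y' : Y}
    {s' t' : ℝ} (h : ApproxDist C s t x y) (h' : ApproxDist C s' t' x' y') :
    dist y y' ≤ dist x x' + (s + t') :=
  hB.dist_le_of_forall fun b hb => by
    obtain ⟨a, hab⟩ := hC ⟨b, hb⟩
    linarith [(h a _ hab).1, (h' a _ hab).2, dist_triangle x x' a]

theorem dist_le_dist_add_of_approxDist_or (hB : Spans B) (hC : ∀ b, ∃ a, C a b) (hst : s ≤ t)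
    {x x' : X} {y y' : Y} (h : ApproxDist C s t x y ∨ ApproxDist C t s x y)
    (h' : ApproxDist C s t x' y' ∨ ApproxDist C t s x' y') :
    dist y y' ≤ dist x x' + (s + t) := by
  rcases h with h | h <;> rcases h' with h' | h'
  · exact h.dist_le_dist_add hB hC h'
  · linarith [h.dist_le_dist_add hB hC h']
  · -- in this order the error is `s + s` rather than `t + t`
    rw [dist_comm, dist_comm x]
    linarith [h'.dist_le_dist_add hB hC h]
  · linarith [h.dist_le_dist_add hB hC h']

theorem isCorrespondence_approxDist (hA : Spans A) (hB : Spans B) (hCA : ∀ a, ∃ b, C a b)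
    (hCB : ∀ b, ∃ a, C a b) (hst : s ≤ t) (hΦ : ∀ x, ∃ y, ApproxDist C s t x y)
    (hΨ : ∀ y, ∃ x, ApproxDist C t s x y) :
    IsCorrespondence (fun x y => ApproxDist C s t x y ∨ ApproxDist C t s x y) (s + t) where
  exists_right x := (hΦ x).imp fun _ => Or.inl
  exists_left y := (hΨ y).imp fun _ => Or.inr
  abs_dist_sub_dist_le _ _ _ _ h h' := by
    have hX := dist_le_dist_add_of_approxDist_or (C := flip C) hA hCA hst
      (h.symm.imp approxDist_flip.mpr approxDist_flip.mpr)
      (h'.symm.imp approxDist_flip.mpr approxDist_flip.mpr)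
    have hY := dist_le_dist_add_of_approxDist_or hB hCB hst h h'
    exact abs_sub_le_iff.mpr ⟨by linarith, by linarith⟩

end ApproxDist

theorem ghDist_le_two_mul_of_ghRealization {X Y : Type} [MetricSpace X] [MetricSpace Y]
    (hX : IsInjectiveMS X) (hY : IsInjectiveMS Y) {A : Set X} (hA : Spans A) {B : Set Y}
    (hB : Spans B) {ρ : ℝ≥0∞} (R : GHRealization A B ρ) : ghDist X Y ≤ 2 * ρ := by
  obtain ⟨r, hr, hrρ, C, hC⟩ := R.exists_isCorrespondence
  have hR := isCorrespondence_approxDist hA hB hC.exists_right hC.exists_left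
    (by linarith : r ≤ 3 * r) (hY.exists_approxDist hA hr hC)
    fun y => (hX.exists_approxDist hB hr hC.flip y).imp fun _ => approxDist_flip.mp
  calc ghDist X Y ≤ ENNReal.ofReal (2 * r) :=
        ghDist_le_of_isCorrespondence (by convert hR using 1; ring) (by positivity)
    _ = 2 * ENNReal.ofReal r := by rw [ENNReal.ofReal_mul zero_le_two, ENNReal.ofReal_ofNat]
    _ ≤ 2 * ρ := by gcongr

/-- Theorem 3.1: if `A` spans the injective metric space `X` and `B` spans the
injective metric space `Y`, then `d_GH(X,Y) ≤ 2 d_GH(A,B)`. -/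
theorem ghDist_le_two_ghDist_of_spans {X Y : Type} [MetricSpace X] [MetricSpace Y]
    (hX : IsInjectiveMS X) (hY : IsInjectiveMS Y)
    (A : Set X) (hA : Spans A) (B : Set Y) (hB : Spans B) :
    ghDist X Y ≤ 2 * ghDist A B := by
  simp_rw [ghDist, ENNReal.mul_iInf_of_ne two_ne_zero ENNReal.ofNat_ne_top]
  exact le_iInf₂ fun ρ ⟨_, ⟨R⟩⟩ => ghDist_le_two_mul_of_ghRealization hX hY hA hB R
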